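/- Given rates r_{ij} ≥ 0 for groups i ∈ [L] and PRBs j ∈ [N] and a rate requirement R > 0, a feasible binary assignment {x_{ij}} satisfying ∑_j x_{ij} r_{ij} ≥ R for all i and ∑_i x_{ij} ≤ 1 for all j exists for the instance built from a 3-partition input (L = m, N = P, R = B, r_{ij} = ρ_j) if and only if the 3-partition instance has a solution. -/

import Mathlib

/-!
A feasible assignment gives pairwise disjoint groups of items, each of total rate at least `B`.
Since all rates together only sum to `m * B`, every group has rate exactly `B` and the groups
exhaust all items (rates are positive). The bounds `B / 4 < ρ k < B / 2` then leave room for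
exactly three items per group. Conversely, a 3-partition is itself a feasible assignment.
-/

open Finset Function

theorem Finset.card_filter_mem_le_one_iff_pairwise_disjoint {ι α : Type*} [Fintype ι]
    [DecidableEq α] (Y : ι → Finset α) :
    (∀ j, (univ.filter fun i => j ∈ Y i).card ≤ 1) ↔ Pairwise (Disjoint on Y) := by
  simp only [card_le_one, mem_filter, mem_univ, true_and, Pairwise, Function.onFun,
    disjoint_left]
  exact ⟨fun h i i' hii' j hi hi' => hii' (h j i hi i' hi'),
    fun h j i hi i' hi' => by_contra fun hii' => h hii' hi hi'⟩

section OrderedWeights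

variable {ι α M : Type*} [AddCommMonoid M] [PartialOrder M] [IsOrderedCancelAddMonoid M]

theorem Finset.eq_univ_of_sum_eq_sum_univ [Fintype α] {w : α → M} (hw : ∀ k, 0 < w k)
    {s : Finset α} (hs : ∑ k ∈ s, w k = ∑ k, w k) : s = univ := by
  refine eq_univ_of_forall fun k => by_contra fun hk => hs.not_lt ?_
  exact sum_lt_sum_of_subset (subset_univ s) (mem_univ k) hk (hw k) fun j _ _ => (hw j).le

theorem Finset.sum_eq_of_pairwise_disjoint_of_le [Fintype ι] [Fintype α] [DecidableEq α]
    {Z : ι → Finset α} {w : α → M} {b : M} (hZ : Pairwise (Disjoint on Z))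
    (hw : ∀ k, 0 ≤ w k) (hb : ∀ i, b ≤ ∑ k ∈ Z i, w k)
    (htotal : ∑ k, w k = Fintype.card ι • b) :
    (∀ i, ∑ k ∈ Z i, w k = b) ∧ ∑ k ∈ univ.biUnion Z, w k = ∑ k, w k := by
  have hunion : ∑ k ∈ univ.biUnion Z, w k = ∑ i, ∑ k ∈ Z i, w k :=
    sum_biUnion fun i _ i' _ hii' => hZ hii'
  have hconst : ∑ _i : ι, b = Fintype.card ι • b := by rw [sum_const, card_univ]
  have htight : ∑ _i : ι, b = ∑ i, ∑ k ∈ Z i, w k := by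
    refine le_antisymm (sum_le_sum fun i _ => hb i) ?_
    calc ∑ i, ∑ k ∈ Z i, w k = ∑ k ∈ univ.biUnion Z, w k := hunion.symm
      _ ≤ ∑ k, w k := sum_le_sum_of_subset_of_nonneg (subset_univ _) fun k _ _ => hw k
      _ = ∑ _i : ι, b := htotal.trans hconst.symm
  refine ⟨fun i => ((sum_eq_sum_iff_of_le fun i _ => hb i).1 htight i (mem_univ i)).symm, ?_⟩
  rw [hunion, ← htight, hconst, htotal]

end OrderedWeights

theorem Finset.card_eq_three_of_sum_eq {α K : Type*} [Field K] [LinearOrder K]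
    [IsStrictOrderedRing K] {s : Finset α} {f : α → K} {b : K} (hb : 0 < b)
    (hlb : ∀ k ∈ s, b / 4 < f k) (hub : ∀ k ∈ s, f k < b / 2) (hs : ∑ k ∈ s, f k = b) :
    s.card = 3 := by
  have hne : s.Nonempty := nonempty_of_sum_ne_zero (hs ▸ hb.ne')
  have hlt : (s.card : K) * (b / 4) < b := by
    simpa [hs] using sum_lt_sum_of_nonempty hne hlb
  have hgt : b < (s.card : K) * (b / 2) := by
    simpa [hs] using sum_lt_sum_of_nonempty hne hub
  have hlt4 : (s.card : K) < 4 := by nlinarith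
  have hgt2 : (2 : K) < s.card := by nlinarith
  have : s.card < 4 := by exact_mod_cast hlt4
  have : 2 < s.card := by exact_mod_cast hgt2
  omega

theorem blp_feasible_iff_three_partition_general
    (m B : ℕ) (ρ : Fin (3 * m) → ℕ)
    (hlb : ∀ k, (B : ℚ) / 4 < (ρ k : ℚ))
    (hub : ∀ k, (ρ k : ℚ) < (B : ℚ) / 2)
    (hsum : ∑ k, ρ k = m * B) :
    (∃ x : Fin m → Fin (3 * m) → Bool,
        (∀ i, B ≤ ∑ j, if x i j then ρ j else 0) ∧
        (∀ j, (Finset.univ.filter fun i => x i j).card ≤ 1)) ↔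
    (∃ Y : Fin m → Finset (Fin (3 * m)),
        (∀ i j, i ≠ j → Disjoint (Y i) (Y j)) ∧
        (∀ k, ∃ i, k ∈ Y i) ∧
        (∀ i, ∑ k ∈ Y i, ρ k = B) ∧
        (∀ i, (Y i).card = 3)) := by
  constructor
  · rintro ⟨x, hfeas, hexcl⟩
    set Y : Fin m → Finset (Fin (3 * m)) := fun i => univ.filter fun j => x i j
    have hdisj : Pairwise (Disjoint on Y) :=
      (card_filter_mem_le_one_iff_pairwise_disjoint Y).1 (by simpa [Y] using hexcl)
    have hρpos : ∀ k, 0 < ρ k := fun k => by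
      exact_mod_cast (by positivity : (0 : ℚ) ≤ B / 4).trans_lt (hlb k)
    obtain ⟨hrate, hunion⟩ := sum_eq_of_pairwise_disjoint_of_le hdisj (fun k => (hρpos k).le)
      (fun i => by simpa [Y, sum_filter] using hfeas i) (by simpa using hsum)
    have hcover := eq_univ_of_sum_eq_sum_univ hρpos hunion
    refine ⟨Y, fun i i' => @hdisj i i', fun k => ?_, hrate, fun i => ?_⟩
    · simpa using (hcover.symm ▸ mem_univ k : k ∈ univ.biUnion Y)
    · have hB : (0 : ℚ) < B := by
        linarith [hlb ⟨i, by omega⟩, hub ⟨i, by omega⟩]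
      exact card_eq_three_of_sum_eq hB (fun k _ => hlb k) (fun k _ => hub k)
        (by exact_mod_cast hrate i)
  · rintro ⟨Y, hdisj, -, hrate, -⟩
    refine ⟨fun i j => decide (j ∈ Y i), fun i => by simp [sum_ite_mem, hrate], ?_⟩
    simpa using (card_filter_mem_le_one_iff_pairwise_disjoint Y).2 fun i i' => hdisj i i'

/-- The resource allocation feasibility instance built from a 3-partition
input (`L = m` groups, `N = P = 3m` items with rates `ρ_j`, requirement `R = B`) has a
feasible binary assignment if and only if the 3-partition instance has a solution. -/
theorem blp_feasible_iff_three_partition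
    (m B : ℕ) (ρ : Fin (3 * m) → ℕ)
    (hpos : ∀ k, 0 < ρ k)
    (hlb : ∀ k, (B : ℚ) / 4 < (ρ k : ℚ))
    (hub : ∀ k, (ρ k : ℚ) < (B : ℚ) / 2)
    (hsum : ∑ k, ρ k = m * B) :
    (∃ x : Fin m → Fin (3 * m) → Bool,
        (∀ i, B ≤ ∑ j, if x i j then ρ j else 0) ∧
        (∀ j, (Finset.univ.filter fun i => x i j).card ≤ 1)) ↔
    (∃ Y : Fin m → Finset (Fin (3 * m)),
        (∀ i j, i ≠ j → Disjoint (Y i) (Y j)) ∧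
        (∀ k, ∃ i, k ∈ Y i) ∧
        (∀ i, ∑ k ∈ Y i, ρ k = B) ∧
        (∀ i, (Y i).card = 3)) :=
  blp_feasible_iff_three_partition_general m B ρ hlb hub hsum
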